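/- Let {xₙ} be a bounded sequence in ℝ^m such that ‖xₙ - x*‖ converges for every x* in a set S ⊆ ℝ^m, and every cluster point of {xₙ} lies in S. Then {xₙ} converges to some point of S. -/

import Mathlib

open Filter Topology

/-! A bounded sequence in a proper space has a cluster point `p`, which lies in `S`, so
`dist (x n) p` converges. Since `x` clusters at `p`, `dist (x n) p` clusters at `dist p p = 0`,
hence its limit is `0` and `x n → p`. -/

theorem MapClusterPt.eq_of_tendsto {X ι : Type*} [TopologicalSpace X] [T2Space X]
    {F : Filter ι} {u : ι → X} {a b : X} (ha : MapClusterPt a F u) (hb : Tendsto u F (𝓝 b)) :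
    a = b :=
  t2_iff_nhds.1 inferInstance (ha.clusterPt.mono hb)

theorem tendsto_of_mapClusterPt_of_tendsto_dist {α ι : Type*} [PseudoMetricSpace α]
    {F : Filter ι} {u : ι → α} {p : α} {l : ℝ} (hp : MapClusterPt p F u)
    (hl : Tendsto (fun i => dist (u i) p) F (𝓝 l)) : Tendsto u F (𝓝 p) := by
  have hl0 : dist p p = l :=
    (hp.tendsto_comp ((continuous_id.dist continuous_const).tendsto p)).eq_of_tendsto hl
  rw [dist_self] at hl0
  exact tendsto_iff_dist_tendsto_zero.2 (hl0 ▸ hl)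

theorem exists_tendsto_of_tendsto_dist_of_mapClusterPt_mem {α ι : Type*} [PseudoMetricSpace α]
    [ProperSpace α] {F : Filter ι} [NeBot F] {S : Set α} {x : ι → α}
    (hbdd : Bornology.IsBounded (Set.range x))
    (hlim : ∀ s ∈ S, ∃ l : ℝ, Tendsto (fun i => dist (x i) s) F (𝓝 l))
    (hcluster : ∀ p, MapClusterPt p F x → p ∈ S) :
    ∃ p ∈ S, Tendsto x F (𝓝 p) := by
  obtain ⟨p, -, hp⟩ := hbdd.isCompact_closure.exists_mapClusterPt (f := F) (u := x)
    (tendsto_principal.2 (.of_forall fun i => subset_closure (Set.mem_range_self i)))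
  have hpS : p ∈ S := hcluster p hp
  obtain ⟨l, hl⟩ := hlim p hpS
  exact ⟨p, hpS, tendsto_of_mapClusterPt_of_tendsto_dist hp hl⟩

theorem opial_type_convergence_general
    {m : ℕ} (S : Set (EuclideanSpace ℝ (Fin m)))
    (x : ℕ → EuclideanSpace ℝ (Fin m))
    (hbdd : ∃ M : ℝ, ∀ n, ‖x n‖ ≤ M)
    (hlim : ∀ xs ∈ S, ∃ l : ℝ, Filter.Tendsto (fun n => ‖x n - xs‖) Filter.atTop (nhds l))
    (hcluster : ∀ p, MapClusterPt p Filter.atTop x → p ∈ S) :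
    ∃ p ∈ S, Filter.Tendsto x Filter.atTop (nhds p) := by
  have hrange : Bornology.IsBounded (Set.range x) := by
    obtain ⟨M, hM⟩ := hbdd
    exact isBounded_iff_forall_norm_le.2 ⟨M, Set.forall_mem_range.2 hM⟩
  refine exists_tendsto_of_tendsto_dist_of_mapClusterPt_mem hrange (fun s hs => ?_) hcluster
  simpa only [dist_eq_norm] using hlim s hs

theorem opial_type_convergence
    {m : ℕ} (S : Set (EuclideanSpace ℝ (Fin m))) (hS : S.Nonempty)
    (x : ℕ → EuclideanSpace ℝ (Fin m))
    (hbdd : ∃ M : ℝ, ∀ n, ‖x n‖ ≤ M)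
    (hlim : ∀ xs ∈ S, ∃ l : ℝ, Filter.Tendsto (fun n => ‖x n - xs‖) Filter.atTop (nhds l))
    (hcluster : ∀ p, MapClusterPt p Filter.atTop x → p ∈ S) :
    ∃ p ∈ S, Filter.Tendsto x Filter.atTop (nhds p) :=
  opial_type_convergence_general S x hbdd hlim hcluster
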